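/- Let 𝔤 ⊆ E be a linear subspace with orthogonal complement 𝔤ᗮ and orthogonal projections P∥, P⊥ onto 𝔤, 𝔤ᗮ. Let H : E → E be self-adjoint with H·v = 0 for v ∈ 𝔤, H(𝔤ᗮ) ⊆ 𝔤ᗮ, and λ_min‖y‖² ≤ ⟨H·y, y⟩ ≤ λ_max‖y‖² for all y ∈ 𝔤ᗮ with 0 < λ_min ≤ λ_max. Let α, h > 0 with 0 < α·h < 2·λ_min·c₁²/(λ_max²·c₂), and let g : ℕ → E be a sequence of invertible matrices with c₁·I ≼ gₖ·gₖᵀ ≼ c₂·I (0 < c₁ ≤ c₂) and gₖ·v·gₖ⁻¹ ∈ 𝔤 for all v ∈ 𝔤 and all k. Let Kp, Kd ∈ E be such that the 2n×2n real block matrix [[I, h·I],[Kp, Kd]] is Schur stable (spectral radius strictly less than 1). Let A : ℕ → (𝔤 → 𝔤) be a family of linear maps, and suppose the sequences e⊥ : ℕ → 𝔤ᗮ, e∥ : ℕ → 𝔤, ξ̃ : ℕ → 𝔤 satisfy: e⊥_{k+1} = e⊥_k − h·α·P⊥((H·e⊥_k)·(gₖ·gₖᵀ)⁻¹); e∥_{k+1}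 = e∥_k + h·gₖ·ξ̃_k·gₖ⁻¹ + h·W_k; ξ̃_{k+1} = ξ̃_k + h·A_k·ξ̃_k + v_k, where W_k = −α·P∥((H·e⊥_k)·(gₖ·gₖᵀ)⁻¹), v_k = Y_k − ξ̃_k − h·A_k·ξ̃_k, and Y_k = g_{k+1}⁻¹·(Kp·e∥_k + Kd·(gₖ·ξ̃_k·gₖ⁻¹ + W_k) − W_{k+1})·g_{k+1}. Then (e⊥, e∥, ξ̃) converges exponentially to zero: there exist C > 0 and ρ ∈ (0,1) such that ‖e⊥_k‖ + ‖e∥_k‖ + ‖ξ̃_k‖ ≤ C·ρᵏ·(‖e⊥₀‖ + ‖e∥₀‖ + ‖ξ̃₀‖) for all k ∈ ℕ. -/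

import Mathlib

open scoped Matrix

attribute [local instance] Matrix.frobeniusNormedAddCommGroup Matrix.frobeniusNormedSpace

/-- The Frobenius inner product `⟨A, B⟩ = trace (Aᵀ B)` on real `n × n` matrices. -/
def fip {n : ℕ} (A B : Matrix (Fin n) (Fin n) ℝ) : ℝ := (Aᵀ * B).trace

/-- The orthogonal complement of a subspace of real `n × n` matrices with respect to the
Frobenius inner product. -/
def mperp {n : ℕ} (g : Submodule ℝ (Matrix (Fin n) (Fin n) ℝ)) :
    Submodule ℝ (Matrix (Fin n) (Fin n) ℝ) where
  carrier := {y | ∀ v ∈ g, fip v y = 0}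
  add_mem' := by
    intro a b ha hb v hv
    have ha' := ha v hv
    have hb' := hb v hv
    simp only [fip] at *
    rw [Matrix.mul_add, Matrix.trace_add, ha', hb', add_zero]
  zero_mem' := by
    intro v hv
    simp [fip]
  smul_mem' := by
    intro c a ha v hv
    have ha' := ha v hv
    simp only [fip] at *
    rw [Matrix.mul_smul, Matrix.trace_smul, ha', smul_zero]

namespace T4

variable {n : ℕ}

lemma fip_comm (A B : Matrix (Fin n) (Fin n) ℝ) : fip A B = fip B A := by
  rw [fip, fip, ← Matrix.trace_transpose, Matrix.transpose_mul, Matrix.transpose_transpose]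

lemma fip_add_right (A B C : Matrix (Fin n) (Fin n) ℝ) :
    fip A (B + C) = fip A B + fip A C := by simp [fip, Matrix.mul_add]

lemma fip_add_left (A B C : Matrix (Fin n) (Fin n) ℝ) :
    fip (A + B) C = fip A C + fip B C := by
  simp [fip, Matrix.transpose_add, Matrix.add_mul]

lemma fip_smul_right (c : ℝ) (A B : Matrix (Fin n) (Fin n) ℝ) :
    fip A (c • B) = c * fip A B := by simp [fip, Matrix.mul_smul]

lemma fip_smul_left (c : ℝ) (A B : Matrix (Fin n) (Fin n) ℝ) :
    fip (c • A) B = c * fip A B := by simp [fip, Matrix.transpose_smul, Matrix.smul_mul]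

lemma fip_sub_right (A B C : Matrix (Fin n) (Fin n) ℝ) :
    fip A (B - C) = fip A B - fip A C := by simp [fip, Matrix.mul_sub]

lemma fip_sub_left (A B C : Matrix (Fin n) (Fin n) ℝ) :
    fip (A - B) C = fip A C - fip B C := by
  simp [fip, Matrix.transpose_sub, Matrix.sub_mul]

lemma fip_self_eq_sum (A : Matrix (Fin n) (Fin n) ℝ) :
    fip A A = ∑ i, ∑ j, (A i j)^2 := by
  rw [fip, Matrix.trace]
  rw [Finset.sum_comm]
  congr 1
  ext i
  simp [Matrix.mul_apply, Matrix.diag, sq]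

lemma norm_sq_eq_fip (A : Matrix (Fin n) (Fin n) ℝ) : ‖A‖^2 = fip A A := by
  have h : ‖A‖ = Real.sqrt (fip A A) := by
    rw [Matrix.frobenius_norm_def, fip_self_eq_sum, Real.sqrt_eq_rpow]
    congr 1
    refine Finset.sum_congr rfl fun i _ => Finset.sum_congr rfl fun j _ => ?_
    rw [Real.norm_eq_abs, show (2:ℝ) = ((2:ℕ):ℝ) by norm_num, Real.rpow_natCast, sq_abs]
  rw [h, Real.sq_sqrt]
  · rw [fip_self_eq_sum]
    positivity

lemma fip_self_nonneg (A : Matrix (Fin n) (Fin n) ℝ) : 0 ≤ fip A A := by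
  rw [← norm_sq_eq_fip]; positivity

lemma cs_aux {a b c : ℝ} (h : ∀ t : ℝ, 0 ≤ a + 2*t*b + t^2*c) : b^2 ≤ a*c := by
  have hd := discrim_le_zero (a := c) (b := 2*b) (c := a) (fun t => by
    have := h t; nlinarith [h t])
  rw [discrim] at hd
  nlinarith

lemma fip_cs (A B : Matrix (Fin n) (Fin n) ℝ) : (fip A B)^2 ≤ ‖A‖^2 * ‖B‖^2 := by
  rw [norm_sq_eq_fip, norm_sq_eq_fip]
  apply cs_aux
  intro t
  have h0 := fip_self_nonneg (A + t • B)
  simp only [fip_add_left, fip_add_right, fip_smul_left, fip_smul_right,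
    fip_comm B A] at h0
  nlinarith [h0]

-- diagonal entries of Q * M * Qᵀ as quadratic forms
lemma conj_diag (M Q : Matrix (Fin n) (Fin n) ℝ) (i : Fin n) :
    (Q * M * Qᵀ) i i = (fun a => Q i a) ⬝ᵥ M *ᵥ (fun a => Q i a) := by
  simp only [Matrix.mul_apply, Matrix.transpose_apply, dotProduct, Matrix.mulVec,
    Finset.sum_mul, Finset.mul_sum]
  rw [Finset.sum_comm]
  exact Finset.sum_congr rfl fun j _ => Finset.sum_congr rfl fun a _ => by ring

lemma trace_conj_nonneg {M : Matrix (Fin n) (Fin n) ℝ} (hM : M.PosSemidef)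
    (Q : Matrix (Fin n) (Fin n) ℝ) : 0 ≤ (Q * M * Qᵀ).trace := by
  rw [Matrix.trace]
  apply Finset.sum_nonneg
  intro i _
  have := hM.dotProduct_mulVec_nonneg (fun a => Q i a)
  simpa [conj_diag, Matrix.diag] using this


lemma norm_sq_eq_sum (A : Matrix (Fin n) (Fin n) ℝ) :
    ‖A‖^2 = ∑ i, ∑ j, (A i j)^2 := by
  have h : ‖A‖ = Real.sqrt (∑ i, ∑ j, (A i j)^2) := by
    rw [Matrix.frobenius_norm_def, Real.sqrt_eq_rpow]
    congr 1
    refine Finset.sum_congr rfl fun i _ => Finset.sum_congr rfl fun j _ => ?_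
    rw [Real.norm_eq_abs, show (2:ℝ) = ((2:ℕ):ℝ) by norm_num, Real.rpow_natCast, sq_abs]
  rw [h, Real.sq_sqrt]
  positivity

lemma norm_sq_eq_trace (Q : Matrix (Fin n) (Fin n) ℝ) :
    (Q * Qᵀ).trace = ‖Q‖^2 := by
  rw [norm_sq_eq_sum, Matrix.trace]
  refine Finset.sum_congr rfl fun i _ => ?_
  simp [Matrix.mul_apply, sq]

lemma trace_conj_lower {M : Matrix (Fin n) (Fin n) ℝ} {c : ℝ}
    (h : (M - c • (1:Matrix (Fin n) (Fin n) ℝ)).PosSemidef) (Q : Matrix (Fin n) (Fin n) ℝ) :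
    c * ‖Q‖^2 ≤ (Q * M * Qᵀ).trace := by
  have h0 := trace_conj_nonneg h Q
  have hexp : Q * (M - c • 1) * Qᵀ = Q * M * Qᵀ - c • (Q * Qᵀ) := by
    rw [Matrix.mul_sub, Matrix.sub_mul, Matrix.mul_smul, Matrix.mul_one, Matrix.smul_mul]
  rw [hexp, Matrix.trace_sub, Matrix.trace_smul, norm_sq_eq_trace] at h0
  simp at h0
  linarith

lemma trace_conj_upper {M : Matrix (Fin n) (Fin n) ℝ} {c : ℝ}
    (h : (c • (1:Matrix (Fin n) (Fin n) ℝ) - M).PosSemidef) (Q : Matrix (Fin n) (Fin n) ℝ) :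
    (Q * M * Qᵀ).trace ≤ c * ‖Q‖^2 := by
  have h0 := trace_conj_nonneg h Q
  have hexp : Q * (c • 1 - M) * Qᵀ = c • (Q * Qᵀ) - Q * M * Qᵀ := by
    rw [Matrix.mul_sub, Matrix.sub_mul, Matrix.mul_smul, Matrix.mul_one, Matrix.smul_mul]
  rw [hexp, Matrix.trace_sub, Matrix.trace_smul, norm_sq_eq_trace] at h0
  simp at h0
  linarith

lemma trace_conj_symm {S : Matrix (Fin n) (Fin n) ℝ} (hSt : Sᵀ = S)
    (X Y : Matrix (Fin n) (Fin n) ℝ) :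
    (X * S * Yᵀ).trace = (Y * S * Xᵀ).trace := by
  rw [← Matrix.trace_transpose (X * S * Yᵀ)]
  rw [Matrix.transpose_mul, Matrix.transpose_mul, Matrix.transpose_transpose, hSt,
    Matrix.mul_assoc]

lemma trace_form_cs {S : Matrix (Fin n) (Fin n) ℝ} (hS : S.PosSemidef) (hSt : Sᵀ = S)
    (X Y : Matrix (Fin n) (Fin n) ℝ) :
    ((X * S * Yᵀ).trace)^2 ≤ (X * S * Xᵀ).trace * (Y * S * Yᵀ).trace := by
  apply cs_aux
  intro t
  have h0 := trace_conj_nonneg hS (X + t • Y)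
  have hexp : (X + t • Y) * S * (X + t • Y)ᵀ
      = X * S * Xᵀ + t • (X * S * Yᵀ) + t • (Y * S * Xᵀ) + (t*t) • (Y * S * Yᵀ) := by
    rw [Matrix.transpose_add, Matrix.transpose_smul]
    simp only [Matrix.add_mul, Matrix.mul_add, Matrix.smul_mul, Matrix.mul_smul,
      smul_smul, smul_add]
    abel
  rw [hexp] at h0
  simp only [Matrix.trace_add, Matrix.trace_smul, smul_eq_mul] at h0
  rw [trace_conj_symm hSt Y X] at h0
  nlinarith [h0]

lemma mul_psd_norm_le {S : Matrix (Fin n) (Fin n) ℝ} {m : ℝ} (hS : S.PosSemidef) (hSt : Sᵀ = S)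
    (hm : 0 ≤ m) (hub : (m • (1:Matrix (Fin n) (Fin n) ℝ) - S).PosSemidef)
    (Q : Matrix (Fin n) (Fin n) ℝ) : ‖Q * S‖ ≤ m * ‖Q‖ := by
  have h1 : ‖Q * S‖^2 = ((Q * S) * S * Qᵀ).trace := by
    rw [← norm_sq_eq_trace (Q * S)]
    congr 1
    rw [Matrix.transpose_mul, hSt]
    rw [Matrix.mul_assoc, Matrix.mul_assoc, Matrix.mul_assoc]
  have hcs := trace_form_cs hS hSt (Q * S) Q
  have h2 : ((Q * S) * S * (Q*S)ᵀ).trace ≤ m * ‖Q * S‖^2 := trace_conj_upper hub (Q * S)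
  have h3 : (Q * S * Qᵀ).trace ≤ m * ‖Q‖^2 := trace_conj_upper hub Q
  have h4 : 0 ≤ (Q * S * Qᵀ).trace := trace_conj_nonneg hS Q
  have h5 : 0 ≤ ((Q * S) * S * (Q*S)ᵀ).trace := trace_conj_nonneg hS (Q*S)
  have hn1 : (0:ℝ) ≤ ‖Q * S‖ := norm_nonneg _
  have hn2 : (0:ℝ) ≤ ‖Q‖ := norm_nonneg _
  rw [← h1] at hcs
  have key : ‖Q*S‖^2 * ‖Q*S‖^2 ≤ (m*‖Q*S‖^2) * (m*‖Q‖^2) :=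
    le_trans (by nlinarith [hcs]) (mul_le_mul h2 h3 h4 (by positivity))
  have h6 : ‖Q*S‖^2 ≤ (m*‖Q‖)^2 := by
    rcases eq_or_lt_of_le hn1 with h|h
    · rw [← h]; simpa using sq_nonneg (m*‖Q‖)
    · nlinarith [key, mul_pos h h]
  calc ‖Q*S‖ = Real.sqrt (‖Q*S‖^2) := (Real.sqrt_sq hn1).symm
    _ ≤ Real.sqrt ((m*‖Q‖)^2) := Real.sqrt_le_sqrt h6
    _ = m*‖Q‖ := Real.sqrt_sq (by positivity)


lemma herm_of_symm {A : Matrix (Fin n) (Fin n) ℝ} (hAt : Aᵀ = A) : A.IsHermitian := by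
  have : Aᴴ = Aᵀ := by
    ext i j
    simp [Matrix.conjTranspose_apply]
  rw [Matrix.IsHermitian, this, hAt]

lemma symm_apply {A : Matrix (Fin n) (Fin n) ℝ} (hAt : Aᵀ = A) (i j : Fin n) :
    A j i = A i j := congrFun (congrFun hAt i) j

lemma dot_symm {A : Matrix (Fin n) (Fin n) ℝ} (hAt : Aᵀ = A) (x y : Fin n → ℝ) :
    x ⬝ᵥ A *ᵥ y = y ⬝ᵥ A *ᵥ x := by
  simp only [dotProduct, Matrix.mulVec, Finset.mul_sum]
  rw [Finset.sum_comm]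
  refine Finset.sum_congr rfl fun i _ => Finset.sum_congr rfl fun j _ => ?_
  rw [symm_apply hAt i j]
  ring

lemma quad_nonneg {A : Matrix (Fin n) (Fin n) ℝ} (hA : A.PosSemidef) (x : Fin n → ℝ) :
    0 ≤ x ⬝ᵥ A *ᵥ x := by
  have := hA.dotProduct_mulVec_nonneg x
  simpa [star_trivial] using this

lemma dot_form_cs {A : Matrix (Fin n) (Fin n) ℝ} (hA : A.PosSemidef) (hAt : Aᵀ = A)
    (x y : Fin n → ℝ) :
    (x ⬝ᵥ A *ᵥ y)^2 ≤ (x ⬝ᵥ A *ᵥ x) * (y ⬝ᵥ A *ᵥ y) := by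
  apply cs_aux
  intro t
  have h0 := quad_nonneg hA (x + t • y)
  simp only [Matrix.mulVec_add, Matrix.mulVec_smul, dotProduct_add,
    add_dotProduct, dotProduct_smul, smul_dotProduct, smul_eq_mul] at h0
  rw [dot_symm hAt y x] at h0
  nlinarith [h0]

lemma dot_cs (x y : Fin n → ℝ) : (x ⬝ᵥ y)^2 ≤ (x ⬝ᵥ x) * (y ⬝ᵥ y) := by
  have h := dot_form_cs (A := (1 : Matrix (Fin n) (Fin n) ℝ))
    (Matrix.PosSemidef.one) (Matrix.transpose_one) x y
  simpa [Matrix.one_mulVec] using h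

lemma dot_self_nonneg (x : Fin n → ℝ) : 0 ≤ x ⬝ᵥ x := by
  apply Finset.sum_nonneg
  intro i _
  exact mul_self_nonneg _

lemma psd_of_quad {A : Matrix (Fin n) (Fin n) ℝ} (hAt : Aᵀ = A)
    (h : ∀ x : Fin n → ℝ, 0 ≤ x ⬝ᵥ A *ᵥ x) : A.PosSemidef := by
  refine Matrix.PosSemidef.of_dotProduct_mulVec_nonneg (herm_of_symm hAt) fun x => ?_
  simpa [star_trivial] using h x

lemma quad_lower {A : Matrix (Fin n) (Fin n) ℝ} {c : ℝ}
    (hl : (A - c • (1:Matrix (Fin n) (Fin n) ℝ)).PosSemidef) (x : Fin n → ℝ) :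
    c * (x ⬝ᵥ x) ≤ x ⬝ᵥ A *ᵥ x := by
  have h := quad_nonneg hl x
  simp only [Matrix.sub_mulVec, Matrix.smul_mulVec, Matrix.one_mulVec,
    dotProduct_sub, dotProduct_smul, smul_eq_mul] at h
  linarith

lemma quad_upper {A : Matrix (Fin n) (Fin n) ℝ} {c : ℝ}
    (hu : (c • (1:Matrix (Fin n) (Fin n) ℝ) - A).PosSemidef) (x : Fin n → ℝ) :
    x ⬝ᵥ A *ᵥ x ≤ c * (x ⬝ᵥ x) := by
  have h := quad_nonneg hu x
  simp only [Matrix.sub_mulVec, Matrix.smul_mulVec, Matrix.one_mulVec,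
    dotProduct_sub, dotProduct_smul, smul_eq_mul] at h
  linarith

lemma inv_bounds {A : Matrix (Fin n) (Fin n) ℝ} {c₁ c₂ : ℝ} (hAt : Aᵀ = A)
    (hu : IsUnit A) (hc₁ : 0 < c₁) (hc₂ : 0 < c₂)
    (hl : (A - c₁ • (1:Matrix (Fin n) (Fin n) ℝ)).PosSemidef)
    (hub : (c₂ • (1:Matrix (Fin n) (Fin n) ℝ) - A).PosSemidef) :
    (A⁻¹ᵀ = A⁻¹) ∧ A⁻¹.PosSemidef ∧
      (A⁻¹ - c₂⁻¹ • (1:Matrix (Fin n) (Fin n) ℝ)).PosSemidef ∧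
      (c₁⁻¹ • (1:Matrix (Fin n) (Fin n) ℝ) - A⁻¹).PosSemidef := by
  have hdet : IsUnit A.det := (Matrix.isUnit_iff_isUnit_det A).mp hu
  have hAS : A * A⁻¹ = 1 := Matrix.mul_nonsing_inv A hdet
  have hSt : A⁻¹ᵀ = A⁻¹ := by rw [Matrix.transpose_nonsing_inv, hAt]
  have hApsd : A.PosSemidef := psd_of_quad hAt (fun x => by
    have h1 := quad_lower hl x
    have h2 := dot_self_nonneg x
    nlinarith)
  -- key pointwise facts
  have key : ∀ x : Fin n → ℝ,
      c₂⁻¹ * (x ⬝ᵥ x) ≤ x ⬝ᵥ A⁻¹ *ᵥ x ∧ x ⬝ᵥ A⁻¹ *ᵥ x ≤ c₁⁻¹ * (x ⬝ᵥ x) := by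
    intro x
    set y := A⁻¹ *ᵥ x with hy
    have hAy : A *ᵥ y = x := by rw [hy, Matrix.mulVec_mulVec, hAS, Matrix.one_mulVec]
    have ht : x ⬝ᵥ A⁻¹ *ᵥ x = y ⬝ᵥ A *ᵥ y := by
      rw [← hy]
      calc x ⬝ᵥ y = (A *ᵥ y) ⬝ᵥ y := by rw [hAy]
        _ = y ⬝ᵥ A *ᵥ y := dotProduct_comm _ _
    have hxy : x ⬝ᵥ y = x ⬝ᵥ A⁻¹ *ᵥ x := by rw [← hy]
    have hlow : c₁ * (y ⬝ᵥ y) ≤ y ⬝ᵥ A *ᵥ y := quad_lower hl y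
    have hup : y ⬝ᵥ A *ᵥ y ≤ c₂ * (y ⬝ᵥ y) := quad_upper hub y
    have hny : 0 ≤ y ⬝ᵥ y := dot_self_nonneg y
    have hnx : 0 ≤ x ⬝ᵥ x := dot_self_nonneg x
    have ht0 : 0 ≤ x ⬝ᵥ A⁻¹ *ᵥ x := by
      rw [ht]; exact quad_nonneg hApsd y
    constructor
    · -- lower bound: c₂⁻¹ nx ≤ t
      have hcs2 : (x ⬝ᵥ A *ᵥ y)^2 ≤ (x ⬝ᵥ A *ᵥ x) * (y ⬝ᵥ A *ᵥ y) := dot_form_cs hApsd hAt x y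
      rw [hAy] at hcs2
      have hqx : x ⬝ᵥ A *ᵥ x ≤ c₂ * (x ⬝ᵥ x) := quad_upper hub x
      have htv0 : 0 ≤ y ⬝ᵥ A *ᵥ y := quad_nonneg hApsd y
      have hnle : x ⬝ᵥ x ≤ c₂ * (x ⬝ᵥ A⁻¹ *ᵥ x) := by
        rcases eq_or_lt_of_le hnx with h0|h0
        · rw [← h0]
          positivity
        · rw [dotProduct_comm y x, hxy] at hcs2
          nlinarith [hcs2, hqx, ht0, h0]
      calc c₂⁻¹ * (x ⬝ᵥ x) ≤ c₂⁻¹ * (c₂ * (x ⬝ᵥ A⁻¹ *ᵥ x)) := by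
            apply mul_le_mul_of_nonneg_left hnle (by positivity)
        _ = x ⬝ᵥ A⁻¹ *ᵥ x := by field_simp
    · -- upper bound: t ≤ c₁⁻¹ nx
      have hcs : (x ⬝ᵥ y)^2 ≤ (x ⬝ᵥ x) * (y ⬝ᵥ y) := dot_cs x y
      rw [hxy] at hcs
      have hc₁t : c₁ * (x ⬝ᵥ A⁻¹ *ᵥ x) ≤ x ⬝ᵥ x := by
        rcases eq_or_lt_of_le hny with h0|h0
        · have h2 : x ⬝ᵥ A⁻¹ *ᵥ x ≤ c₂ * (y ⬝ᵥ y) := by rw [ht]; exact hup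
          rw [← h0] at h2
          have h3 : x ⬝ᵥ A⁻¹ *ᵥ x = 0 := le_antisymm (by simpa using h2) ht0
          rw [h3]
          simpa using hnx
        · have h1 : c₁ * (y ⬝ᵥ y) ≤ x ⬝ᵥ A⁻¹ *ᵥ x := by rw [ht]; exact hlow
          nlinarith [mul_le_mul_of_nonneg_right h1 ht0, hcs, h0]
      calc x ⬝ᵥ A⁻¹ *ᵥ x = c₁⁻¹ * (c₁ * (x ⬝ᵥ A⁻¹ *ᵥ x)) := by field_simp
        _ ≤ c₁⁻¹ * (x ⬝ᵥ x) := mul_le_mul_of_nonneg_left hc₁t (by positivity)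
  have hSpsd : A⁻¹.PosSemidef := psd_of_quad hSt (fun x => by
    nlinarith [(key x).1, dot_self_nonneg x, inv_pos.mpr hc₂])
  refine ⟨hSt, hSpsd, ?_, ?_⟩
  · refine psd_of_quad (by rw [Matrix.transpose_sub, Matrix.transpose_smul,
      Matrix.transpose_one, hSt]) (fun x => ?_)
    simp only [Matrix.sub_mulVec, Matrix.smul_mulVec, Matrix.one_mulVec,
      dotProduct_sub, dotProduct_smul, smul_eq_mul]
    have := (key x).1
    linarith
  · refine psd_of_quad (by rw [Matrix.transpose_sub, Matrix.transpose_smul,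
      Matrix.transpose_one, hSt]) (fun x => ?_)
    simp only [Matrix.sub_mulVec, Matrix.smul_mulVec, Matrix.one_mulVec,
      dotProduct_sub, dotProduct_smul, smul_eq_mul]
    have := (key x).2
    linarith

lemma le_of_sq_le_sq {a b : ℝ} (h : a^2 ≤ b^2) (hb : 0 ≤ b) : a ≤ b := by
  nlinarith [h, hb, sq_nonneg a, sq_nonneg b]

lemma proj_le {x u : Matrix (Fin n) (Fin n) ℝ} (h0 : fip (x - u) u = 0) : ‖u‖ ≤ ‖x‖ := by
  have hx : ‖x‖^2 = ‖x - u‖^2 + ‖u‖^2 := by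
    rw [norm_sq_eq_fip, norm_sq_eq_fip, norm_sq_eq_fip]
    have hxe : x = (x - u) + u := by abel
    calc fip x x = fip ((x - u) + u) ((x - u) + u) := by rw [← hxe]
      _ = fip (x-u) (x-u) + fip (x-u) u + (fip u (x-u) + fip u u) := by
          rw [fip_add_left, fip_add_right, fip_add_right]
      _ = fip (x-u) (x-u) + fip u u := by rw [h0, fip_comm u (x-u), h0]; ring
  apply T4.le_of_sq_le_sq _ (norm_nonneg x)
  nlinarith [sq_nonneg ‖x - u‖, hx]

lemma prod3_mono {c r1 r2 x1 x2 : ℝ} (hc : 0 ≤ c) (hr : r1 ≤ r2) (hr1 : 0 ≤ r1)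
    (hx : x1 ≤ x2) (hx1 : 0 ≤ x1) : c * r1 * x1 ≤ c * r2 * x2 := by
  have h1 : r1 * x1 ≤ r2 * x2 := mul_le_mul hr hx hx1 (le_trans hr1 hr)
  calc c * r1 * x1 = c * (r1 * x1) := mul_assoc _ _ _
    _ ≤ c * (r2 * x2) := mul_le_mul_of_nonneg_left h1 hc
    _ = c * r2 * x2 := (mul_assoc _ _ _).symm

section Spectral
open Polynomial
open scoped ENNReal NNReal
attribute [local instance] Matrix.frobeniusNormedRing Matrix.frobeniusNormedAlgebra

-- spectrum of a complex matrix consists of charpoly roots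
lemma mem_spectrum_isRoot {m : Type*} [Fintype m] [DecidableEq m]
    {M : Matrix m m ℂ} {μ : ℂ} (h : μ ∈ spectrum ℂ M) : M.charpoly.IsRoot μ := by
  rw [spectrum.mem_iff] at h
  have hdet : (Matrix.scalar m μ - M).det = 0 := by
    by_contra hd
    exact h ((Matrix.isUnit_iff_isUnit_det _).mpr (Ne.isUnit hd))
  have : M.charpoly.eval μ = (Matrix.scalar m μ - M).det := by
    rw [Matrix.charpoly, ← Polynomial.coe_evalRingHom, RingHom.map_det]
    congr 1
    ext i j
    by_cases hij : i = j
    · subst hij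
      simp [Matrix.charmatrix_apply_eq, Matrix.scalar_apply]
    · simp [Matrix.charmatrix_apply_ne _ _ _ hij, Matrix.scalar_apply,
        Matrix.one_apply_ne hij, Matrix.diagonal_apply_ne _ hij]
  rwa [Polynomial.IsRoot, this]

lemma pow_exp_decay {m : Type*} [Fintype m] [DecidableEq m] (B : Matrix m m ℝ)
    (hs : ∀ μ : ℂ, (B.map Complex.ofReal).charpoly.IsRoot μ → ‖μ‖ < 1) :
    ∃ C : ℝ, 0 < C ∧ ∃ ρ : ℝ, 0 < ρ ∧ ρ < 1 ∧ ∀ k : ℕ, ‖B^k‖ ≤ C * ρ^k := by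
  rcases isEmpty_or_nonempty m with hm|hm
  · refine ⟨1, one_pos, 1/2, by norm_num, by norm_num, fun k => ?_⟩
    have : B^k = 0 := Subsingleton.elim _ _
    rw [this]
    simp
  · haveI : Nontrivial (Matrix m m ℂ) := by
      obtain ⟨i⟩ := hm
      exact ⟨0, 1, fun hc => by simpa using congrFun (congrFun hc i) i⟩
    set Bc : Matrix m m ℂ := B.map Complex.ofReal with hBc
    have hnormeq : ∀ k : ℕ, ‖Bc ^ k‖ = ‖B ^ k‖ := by
      intro k
      have h1 : Bc ^ k = (B ^ k).map Complex.ofReal := by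
        have he : Bc = Complex.ofRealHom.mapMatrix B := rfl
        calc Bc ^ k = Complex.ofRealHom.mapMatrix (B ^ k) := by rw [he, map_pow]
          _ = (B ^ k).map Complex.ofReal := rfl
      rw [h1]
      exact Matrix.frobenius_norm_map_eq (B ^ k) _ (fun a => Complex.norm_real a)
    have hsp : spectralRadius ℂ Bc < 1 := by
      have h := spectrum.spectralRadius_lt_of_forall_lt (a := Bc) (r := 1) ?_
      · simpa using h
      · intro z hz
        have habs := hs z (mem_spectrum_isRoot hz)
        rw [← NNReal.coe_lt_coe]
        simpa using habs
    obtain ⟨ρ₀, hρ₀l, hρ₀u⟩ := exists_between hsp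
    have hρ₀top : ρ₀ ≠ ⊤ := ne_top_of_lt hρ₀u
    set ρn : ℝ≥0 := ρ₀.toNNReal with hρn
    have hρcoe : (ρn : ℝ≥0∞) = ρ₀ := ENNReal.coe_toNNReal hρ₀top
    have hρn1 : ρn < 1 := by
      rw [← ENNReal.coe_lt_coe, hρcoe]
      simpa using hρ₀u
    have hρn0 : 0 < ρn := by
      rw [← ENNReal.coe_pos, hρcoe]
      exact lt_of_le_of_lt (by simp) hρ₀l
    have gel := spectrum.pow_nnnorm_pow_one_div_tendsto_nhds_spectralRadius Bc
    have hev : ∀ᶠ k : ℕ in Filter.atTop, (‖Bc ^ k‖₊ : ℝ≥0∞) ^ (1/(k:ℝ)) < ρ₀ :=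
      gel.eventually_lt_const hρ₀l
    obtain ⟨N, hN⟩ := Filter.eventually_atTop.mp hev
    set ρ : ℝ := (ρn : ℝ) with hρ
    have hρpos : 0 < ρ := hρn0
    have hρlt : ρ < 1 := hρn1
    have hkey : ∀ k : ℕ, N + 1 ≤ k → ‖B ^ k‖ ≤ ρ ^ k := by
      intro k hk
      have hk0 : (k:ℝ) ≠ 0 := Nat.cast_ne_zero.mpr (by omega)
      have h1 : ((‖Bc ^ k‖₊ : ℝ≥0∞) ^ (1/(k:ℝ))) ^ (k:ℕ) ≤ ρ₀ ^ (k:ℕ) :=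
        pow_le_pow_left₀ (by simp) (hN k (by omega)).le k
      have h2 : ((‖Bc ^ k‖₊ : ℝ≥0∞) ^ (1/(k:ℝ))) ^ (k:ℕ) = (‖Bc ^ k‖₊ : ℝ≥0∞) := by
        rw [← ENNReal.rpow_natCast ((‖Bc ^ k‖₊ : ℝ≥0∞) ^ (1/(k:ℝ))), ← ENNReal.rpow_mul,
          one_div, inv_mul_cancel₀ hk0, ENNReal.rpow_one]
      rw [h2] at h1
      rw [← hρcoe, ← ENNReal.coe_pow, ENNReal.coe_le_coe] at h1
      have h3 : ‖Bc ^ k‖ ≤ ρ ^ k := by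
        rw [hρ, ← NNReal.coe_pow]
        exact_mod_cast h1
      rwa [hnormeq k] at h3
    refine ⟨(∑ i ∈ Finset.range (N+1), ‖B ^ i‖ / ρ ^ i) + 1, by positivity, ρ, hρpos, hρlt,
      fun k => ?_⟩
    set C : ℝ := (∑ i ∈ Finset.range (N+1), ‖B ^ i‖ / ρ ^ i) + 1 with hC
    have hC1 : 1 ≤ C := by
      rw [hC]
      have : 0 ≤ ∑ i ∈ Finset.range (N+1), ‖B ^ i‖ / ρ ^ i := by positivity
      linarith
    rcases le_or_gt (N+1) k with hk|hk
    · calc ‖B ^ k‖ ≤ ρ ^ k := hkey k hk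
        _ = 1 * ρ ^ k := (one_mul _).symm
        _ ≤ C * ρ ^ k := by
          apply mul_le_mul_of_nonneg_right hC1 (by positivity)
    · have hmem : k ∈ Finset.range (N+1) := Finset.mem_range.mpr hk
      have h4 : ‖B ^ k‖ / ρ ^ k ≤ C := by
        rw [hC]
        have := Finset.single_le_sum (f := fun i => ‖B ^ i‖ / ρ ^ i)
          (fun i _ => by positivity) hmem
        linarith
      have h5 : ‖B ^ k‖ = (‖B ^ k‖ / ρ ^ k) * ρ ^ k := by field_simp
      rw [h5]
      apply mul_le_mul_of_nonneg_right h4 (by positivity)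


end Spectral

section Rect
variable {m₁ m₂ m p : Type*} [Fintype m₁] [Fintype m₂] [Fintype m] [Fintype p]

lemma rect_norm_sq_eq_sum (A : Matrix m p ℝ) : ‖A‖^2 = ∑ i, ∑ j, (A i j)^2 := by
  have h : ‖A‖ = Real.sqrt (∑ i, ∑ j, (A i j)^2) := by
    rw [Matrix.frobenius_norm_def, Real.sqrt_eq_rpow]
    congr 1
    refine Finset.sum_congr rfl fun i _ => Finset.sum_congr rfl fun j _ => ?_
    rw [Real.norm_eq_abs, show (2:ℝ) = ((2:ℕ):ℝ) by norm_num, Real.rpow_natCast, sq_abs]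
  rw [h, Real.sq_sqrt]
  positivity

lemma fromRows_norm_sq (A : Matrix m₁ p ℝ) (B : Matrix m₂ p ℝ) :
    ‖Matrix.fromRows A B‖^2 = ‖A‖^2 + ‖B‖^2 := by
  rw [rect_norm_sq_eq_sum, rect_norm_sq_eq_sum, rect_norm_sq_eq_sum, Fintype.sum_sum_type]
  rfl

lemma le_of_sq_le_sq' {a b : ℝ} (h : a^2 ≤ b^2) (hb : 0 ≤ b) : a ≤ b := by
  nlinarith [h, hb, sq_nonneg a, sq_nonneg b]

lemma norm_le_fromRows_left (A : Matrix m₁ p ℝ) (B : Matrix m₂ p ℝ) :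
    ‖A‖ ≤ ‖Matrix.fromRows A B‖ := by
  apply le_of_sq_le_sq' _ (norm_nonneg _)
  rw [fromRows_norm_sq]
  nlinarith [sq_nonneg ‖B‖]

lemma norm_le_fromRows_right (A : Matrix m₁ p ℝ) (B : Matrix m₂ p ℝ) :
    ‖B‖ ≤ ‖Matrix.fromRows A B‖ := by
  apply le_of_sq_le_sq' _ (norm_nonneg _)
  rw [fromRows_norm_sq]
  nlinarith [sq_nonneg ‖A‖]

lemma fromRows_norm_le (A : Matrix m₁ p ℝ) (B : Matrix m₂ p ℝ) :
    ‖Matrix.fromRows A B‖ ≤ ‖A‖ + ‖B‖ := by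
  apply le_of_sq_le_sq' _ (by positivity)
  rw [fromRows_norm_sq]
  nlinarith [norm_nonneg A, norm_nonneg B]

end Rect

end T4

open T4 in
set_option maxHeartbeats 2000000 in
/-- **Theorem 4**: under the paper's Assumptions 1 and 2 and the step-size condition
`0 < αh < 2 λmin c₁² / (λmax² c₂)`, the discrete feedback law (17) with Schur-stable gain
block matrix `[[I, h·I], [Kp, Kd]]` renders Euler's discretization (14) of the linearized
tracking-error dynamics exponentially stable to zero. -/
theorem discrete_error_dynamics_exponentially_stable {n : ℕ}
    (𝔤 : Submodule ℝ (Matrix (Fin n) (Fin n) ℝ))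
    (Pperp Ppar : Matrix (Fin n) (Fin n) ℝ →ₗ[ℝ] Matrix (Fin n) (Fin n) ℝ)
    (hPperp : ∀ x, Pperp x ∈ mperp 𝔤 ∧ x - Pperp x ∈ 𝔤)
    (hPpar : ∀ x, Ppar x ∈ 𝔤 ∧ x - Ppar x ∈ mperp 𝔤)
    (H : Matrix (Fin n) (Fin n) ℝ →ₗ[ℝ] Matrix (Fin n) (Fin n) ℝ)
    (hsa : ∀ v w, fip (H v) w = fip v (H w))
    (hker : ∀ v ∈ 𝔤, H v = 0)
    (hHperp : ∀ y ∈ mperp 𝔤, H y ∈ mperp 𝔤)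
    (lmin lmax : ℝ) (hlmin : 0 < lmin) (hlminmax : lmin ≤ lmax)
    (hbound : ∀ y ∈ mperp 𝔤,
      lmin * ‖y‖ ^ 2 ≤ fip (H y) y ∧ fip (H y) y ≤ lmax * ‖y‖ ^ 2)
    (α h : ℝ) (hα : 0 < α) (hh : 0 < h)
    (c₁ c₂ : ℝ) (hc₁ : 0 < c₁) (hc₁₂ : c₁ ≤ c₂)
    (hstep : 0 < α * h) (hstep' : α * h < 2 * lmin * c₁ ^ 2 / (lmax ^ 2 * c₂))
    (g : ℕ → Matrix (Fin n) (Fin n) ℝ)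
    (hgunit : ∀ k, IsUnit (g k))
    (hgbnd : ∀ k, (g k * (g k)ᵀ - c₁ • 1).PosSemidef ∧
      ((c₂ • 1 : Matrix (Fin n) (Fin n) ℝ) - g k * (g k)ᵀ).PosSemidef)
    (hconj : ∀ k, ∀ v ∈ 𝔤, g k * v * (g k)⁻¹ ∈ 𝔤)
    (Kp Kd : Matrix (Fin n) (Fin n) ℝ)
    (hSchur : ∀ μ : ℂ,
      ((Matrix.fromBlocks (1 : Matrix (Fin n) (Fin n) ℝ) (h • 1) Kp Kd).map
        (Complex.ofReal)).charpoly.IsRoot μ → ‖μ‖ < 1)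
    (A : ℕ → (Matrix (Fin n) (Fin n) ℝ →ₗ[ℝ] Matrix (Fin n) (Fin n) ℝ))
    (eperp epar ξt W Y v : ℕ → Matrix (Fin n) (Fin n) ℝ)
    (heperp : ∀ k, eperp k ∈ mperp 𝔤)
    (hepar : ∀ k, epar k ∈ 𝔤)
    (hξt : ∀ k, ξt k ∈ 𝔤)
    (hW : ∀ k, W k = -α • Ppar (H (eperp k) * (g k * (g k)ᵀ)⁻¹))
    (hY : ∀ k, Y k = (g (k + 1))⁻¹ *
      (Kp * epar k + Kd * (g k * ξt k * (g k)⁻¹ + W k) - W (k + 1)) * g (k + 1))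
    (hv : ∀ k, v k = Y k - ξt k - h • A k (ξt k))
    (heperp' : ∀ k, eperp (k + 1) =
      eperp k - (h * α) • Pperp (H (eperp k) * (g k * (g k)ᵀ)⁻¹))
    (hepar' : ∀ k, epar (k + 1) = epar k + h • (g k * ξt k * (g k)⁻¹) + h • W k)
    (hξt' : ∀ k, ξt (k + 1) = ξt k + h • A k (ξt k) + v k) :
    ∃ C > (0 : ℝ), ∃ ρ : ℝ, 0 < ρ ∧ ρ < 1 ∧
      ∀ k : ℕ, ‖eperp k‖ + ‖epar k‖ + ‖ξt k‖ ≤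
        C * ρ ^ k * (‖eperp 0‖ + ‖epar 0‖ + ‖ξt 0‖) := by
  classical
  have hc₂ : 0 < c₂ := lt_of_lt_of_le hc₁ hc₁₂
  have hlmax : 0 < lmax := lt_of_lt_of_le hlmin hlminmax
  have hfipHsymm : ∀ x y : Matrix (Fin n) (Fin n) ℝ, fip (H y) x = fip (H x) y := fun x y => by
    rw [hsa y x, fip_comm]
  have hPperpn : ∀ x, ‖Pperp x‖ ≤ ‖x‖ := fun x => proj_le ((hPperp x).1 _ (hPperp x).2)
  have hPparn : ∀ x, ‖Ppar x‖ ≤ ‖x‖ := fun x =>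
    proj_le (by rw [fip_comm]; exact (hPpar x).2 _ (hPpar x).1)
  -- Cauchy-Schwarz for the H-form on the orthogonal complement
  have hHcs : ∀ x ∈ mperp 𝔤, ∀ y ∈ mperp 𝔤,
      (fip (H x) y)^2 ≤ fip (H x) x * fip (H y) y := by
    intro x hx y hy
    apply cs_aux
    intro t
    have hz : x + t • y ∈ mperp 𝔤 := add_mem hx (Submodule.smul_mem _ t hy)
    have h0 : 0 ≤ fip (H (x + t • y)) (x + t • y) := by
      have h1 := (hbound _ hz).1
      nlinarith [sq_nonneg ‖x + t • y‖, h1, hlmin.le]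
    rw [map_add, map_smul] at h0
    simp only [fip_add_left, fip_add_right, fip_smul_left, fip_smul_right, smul_eq_mul] at h0
    rw [hfipHsymm x y] at h0
    nlinarith [h0]
  have hHform_nonneg : ∀ x ∈ mperp 𝔤, 0 ≤ fip (H x) x := by
    intro x hx
    have := (hbound _ hx).1
    nlinarith [sq_nonneg ‖x‖, hlmin.le]
  have hHnorm : ∀ e ∈ mperp 𝔤, ‖H e‖ ≤ lmax * ‖e‖ := by
    intro e he
    have ha : H e ∈ mperp 𝔤 := hHperp _ he
    have hcs := hHcs e he (H e) ha
    have h1 : fip (H e) (H e) = ‖H e‖^2 := (norm_sq_eq_fip _).symm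
    have h2 : fip (H e) e ≤ lmax * ‖e‖^2 := (hbound _ he).2
    have h2' : 0 ≤ fip (H e) e := hHform_nonneg e he
    have h3 : fip (H (H e)) (H e) ≤ lmax * ‖H e‖^2 := (hbound _ ha).2
    have h3' : 0 ≤ fip (H (H e)) (H e) := hHform_nonneg _ ha
    apply T4.le_of_sq_le_sq _ (by positivity)
    rw [h1] at hcs
    have hkey : (‖H e‖^2)^2 ≤ (lmax * ‖e‖^2) * (lmax * ‖H e‖^2) := by
      calc (‖H e‖^2)^2 ≤ fip (H e) e * fip (H (H e)) (H e) := hcs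
        _ ≤ (lmax * ‖e‖^2) * (lmax * ‖H e‖^2) :=
            mul_le_mul h2 h3 h3' (by positivity)
    nlinarith [hkey, sq_nonneg ‖H e‖, sq_nonneg ‖e‖, norm_nonneg (H e), norm_nonneg e]
  -- matrix facts for each k
  have hAt : ∀ k, (g k * (g k)ᵀ)ᵀ = g k * (g k)ᵀ := fun k => by
    rw [Matrix.transpose_mul, Matrix.transpose_transpose]
  have hAunit : ∀ k, IsUnit (g k * (g k)ᵀ) := by
    intro k
    have hd := (Matrix.isUnit_iff_isUnit_det _).mp (hgunit k)
    apply (Matrix.isUnit_iff_isUnit_det _).mpr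
    rw [Matrix.det_mul, Matrix.det_transpose]
    exact hd.mul hd
  have hS := fun k => inv_bounds (hAt k) (hAunit k) hc₁ hc₂ (hgbnd k).1 (hgbnd k).2
  -- step size
  have hαh : 0 < h * α := mul_pos hh hα
  have hstep'' : α * h * (lmax^2 * c₂) < 2*lmin*c₁^2 := by
    rw [lt_div_iff₀ (by positivity)] at hstep'
    exact hstep'
  have hδpos : 0 < (h*α) * (2/c₂ - (h*α) * lmax / c₁^2) := by
    apply mul_pos hαh
    rw [sub_pos, div_lt_div_iff₀ (by positivity) (by positivity)]
    nlinarith [hstep'', hlmax, hlminmax, hc₁, hc₂, mul_pos hαh hlmax]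
  set δ : ℝ := (h*α) * (2/c₂ - (h*α) * lmax / c₁^2) with hδdef
  -- Lyapunov decrement
  set r : ℝ := max (1 - δ * lmin) (1/2) with hr
  have hrpos : 0 < r := lt_of_lt_of_le (by norm_num) (le_max_right _ _)
  have hr1 : r < 1 := by
    apply max_lt _ (by norm_num)
    nlinarith [mul_pos hδpos hlmin]
  have hV0 : ∀ k, 0 ≤ fip (H (eperp k)) (eperp k) := fun k => hHform_nonneg _ (heperp k)
  have hVdec : ∀ k, fip (H (eperp (k+1))) (eperp (k+1)) ≤ r * fip (H (eperp k)) (eperp k) := by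
    intro k
    obtain ⟨hSt, hSpsd, hSlow, hSup⟩ := hS k
    have he' := heperp' k
    have heK := heperp k
    have hqperp : H (eperp k) ∈ mperp 𝔤 := hHperp _ heK
    have hpperp : Pperp (H (eperp k) * (g k * (g k)ᵀ)⁻¹) ∈ mperp 𝔤 := (hPperp _).1
    have hexp : fip (H (eperp (k+1))) (eperp (k+1))
        = fip (H (eperp k)) (eperp k)
          - (h*α) * fip (H (eperp k)) (Pperp (H (eperp k) * (g k * (g k)ᵀ)⁻¹))
          - (h*α) * fip (H (Pperp (H (eperp k) * (g k * (g k)ᵀ)⁻¹))) (eperp k)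
          + (h*α)^2 * fip (H (Pperp (H (eperp k) * (g k * (g k)ᵀ)⁻¹)))
              (Pperp (H (eperp k) * (g k * (g k)ᵀ)⁻¹)) := by
      rw [he', map_sub, map_smul]
      simp only [fip_sub_left, fip_sub_right, fip_smul_left, fip_smul_right, smul_eq_mul]
      ring
    have hsymm1 : fip (H (Pperp (H (eperp k) * (g k * (g k)ᵀ)⁻¹))) (eperp k)
        = fip (H (eperp k)) (Pperp (H (eperp k) * (g k * (g k)ᵀ)⁻¹)) :=
      hfipHsymm (eperp k) _
    have hqp : fip (H (eperp k)) (Pperp (H (eperp k) * (g k * (g k)ᵀ)⁻¹))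
        = (H (eperp k) * (g k * (g k)ᵀ)⁻¹ * (H (eperp k))ᵀ).trace := by
      have hcross : fip (H (eperp k) * (g k * (g k)ᵀ)⁻¹
          - Pperp (H (eperp k) * (g k * (g k)ᵀ)⁻¹)) (H (eperp k)) = 0 :=
        hqperp _ (hPperp _).2
      have h2 : fip (H (eperp k)) (H (eperp k) * (g k * (g k)ᵀ)⁻¹
          - Pperp (H (eperp k) * (g k * (g k)ᵀ)⁻¹)) = 0 := by
        rw [fip_comm]; exact hcross
      rw [fip_sub_right] at h2
      have h1 : fip (H (eperp k)) (Pperp (H (eperp k) * (g k * (g k)ᵀ)⁻¹))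
          = fip (H (eperp k)) (H (eperp k) * (g k * (g k)ᵀ)⁻¹) := by linarith
      rw [h1, fip, Matrix.trace_mul_comm, Matrix.mul_assoc]
    have hqplb : c₂⁻¹ * ‖H (eperp k)‖^2
        ≤ fip (H (eperp k)) (Pperp (H (eperp k) * (g k * (g k)ᵀ)⁻¹)) := by
      rw [hqp]; exact trace_conj_lower hSlow _
    have hppbd : fip (H (Pperp (H (eperp k) * (g k * (g k)ᵀ)⁻¹)))
        (Pperp (H (eperp k) * (g k * (g k)ᵀ)⁻¹))
        ≤ lmax * ‖Pperp (H (eperp k) * (g k * (g k)ᵀ)⁻¹)‖^2 := (hbound _ hpperp).2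
    have hpnorm : ‖Pperp (H (eperp k) * (g k * (g k)ᵀ)⁻¹)‖ ≤ c₁⁻¹ * ‖H (eperp k)‖ := by
      calc ‖Pperp (H (eperp k) * (g k * (g k)ᵀ)⁻¹)‖
          ≤ ‖H (eperp k) * (g k * (g k)ᵀ)⁻¹‖ := hPperpn _
        _ ≤ c₁⁻¹ * ‖H (eperp k)‖ := mul_psd_norm_le hSpsd hSt (by positivity) hSup _
    have hqVlb : lmin * fip (H (eperp k)) (eperp k) ≤ ‖H (eperp k)‖^2 := by
      have hcs := fip_cs (H (eperp k)) (eperp k)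
      have hlb := (hbound _ heK).1
      rcases eq_or_lt_of_le (hHform_nonneg _ heK) with h0|h0
      · rw [← h0, mul_zero]
        positivity
      · nlinarith [hcs, hlb, h0, sq_nonneg ‖eperp k‖, sq_nonneg ‖H (eperp k)‖, hlmin]
    have hppbd2 : fip (H (Pperp (H (eperp k) * (g k * (g k)ᵀ)⁻¹)))
        (Pperp (H (eperp k) * (g k * (g k)ᵀ)⁻¹))
        ≤ lmax * (c₁⁻¹ * ‖H (eperp k)‖)^2 := by
      refine le_trans hppbd ?_
      have hnn : (0:ℝ) ≤ ‖Pperp (H (eperp k) * (g k * (g k)ᵀ)⁻¹)‖ := norm_nonneg _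
      have hsq : ‖Pperp (H (eperp k) * (g k * (g k)ᵀ)⁻¹)‖^2 ≤ (c₁⁻¹ * ‖H (eperp k)‖)^2 := by
        nlinarith [hpnorm, hnn]
      exact mul_le_mul_of_nonneg_left hsq hlmax.le
    have hVle : fip (H (eperp (k+1))) (eperp (k+1))
        ≤ fip (H (eperp k)) (eperp k) - δ * ‖H (eperp k)‖^2 := by
      rw [hexp, hsymm1]
      have hm1 := mul_le_mul_of_nonneg_left hqplb (by positivity : (0:ℝ) ≤ 2*(h*α))
      have hm2 := mul_le_mul_of_nonneg_left hppbd2 (sq_nonneg (h*α))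
      have hc₁' : c₁ ≠ 0 := ne_of_gt hc₁
      have hc₂' : c₂ ≠ 0 := ne_of_gt hc₂
      have hident : δ * ‖H (eperp k)‖^2
          = 2*(h*α) * (c₂⁻¹ * ‖H (eperp k)‖^2)
            - (h*α)^2 * (lmax * (c₁⁻¹ * ‖H (eperp k)‖)^2) := by
        rw [hδdef]
        field_simp
      linarith [hm1, hm2, hident]
    calc fip (H (eperp (k+1))) (eperp (k+1))
        ≤ fip (H (eperp k)) (eperp k) - δ * (lmin * fip (H (eperp k)) (eperp k)) := by
          nlinarith [hVle, hqVlb, hδpos]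
      _ = (1 - δ*lmin) * fip (H (eperp k)) (eperp k) := by ring
      _ ≤ r * fip (H (eperp k)) (eperp k) :=
          mul_le_mul_of_nonneg_right (le_max_left _ _) (hHform_nonneg _ heK)
  have hVk : ∀ k, fip (H (eperp k)) (eperp k) ≤ r^k * fip (H (eperp 0)) (eperp 0) := by
    intro k
    induction k with
    | zero => simp
    | succ k ih =>
      calc fip (H (eperp (k+1))) (eperp (k+1)) ≤ r * fip (H (eperp k)) (eperp k) := hVdec k
        _ ≤ r * (r^k * fip (H (eperp 0)) (eperp 0)) := mul_le_mul_of_nonneg_left ih hrpos.le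
        _ = r^(k+1) * fip (H (eperp 0)) (eperp 0) := by ring
  set ρ1 : ℝ := Real.sqrt r with hρ1def
  set C1 : ℝ := Real.sqrt (lmax/lmin) with hC1def
  have hρ1pos : 0 < ρ1 := Real.sqrt_pos.mpr hrpos
  have hρ11 : ρ1 < 1 := by
    rw [hρ1def, show (1:ℝ) = Real.sqrt 1 by rw [Real.sqrt_one]]
    exact Real.sqrt_lt_sqrt hrpos.le hr1
  have hC1pos : 0 < C1 := Real.sqrt_pos.mpr (by positivity)
  have heperpk : ∀ k, ‖eperp k‖ ≤ C1 * ρ1^k * ‖eperp 0‖ := by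
    intro k
    apply T4.le_of_sq_le_sq _
      (mul_nonneg (mul_nonneg hC1pos.le (pow_nonneg hρ1pos.le k)) (norm_nonneg _))
    have h1 : lmin * ‖eperp k‖^2 ≤ fip (H (eperp k)) (eperp k) := (hbound _ (heperp k)).1
    have h2 : fip (H (eperp 0)) (eperp 0) ≤ lmax * ‖eperp 0‖^2 := (hbound _ (heperp 0)).2
    have h3 := hVk k
    have hC1sq : C1^2 = lmax/lmin := Real.sq_sqrt (by positivity)
    have hρ1sq : ρ1^2 = r := Real.sq_sqrt hrpos.le
    have hrk : (ρ1^k)^2 = r^k := by rw [← pow_mul, mul_comm, pow_mul, hρ1sq]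
    have hrknn : 0 ≤ r^k := pow_nonneg hrpos.le k
    have h4 := mul_le_mul_of_nonneg_left h2 hrknn
    rw [mul_pow, mul_pow, hC1sq, hrk, div_mul_eq_mul_div, div_mul_eq_mul_div,
      le_div_iff₀ hlmin]
    nlinarith [h1, h3, h4]
  -- Part 2 : the (epar, y) recursion
  obtain ⟨C2, hC2pos, ρ2, hρ2pos, hρ21, hpow⟩ :=
    pow_exp_decay (Matrix.fromBlocks (1 : Matrix (Fin n) (Fin n) ℝ) (h • 1) Kp Kd) hSchur
  set BM := Matrix.fromBlocks (1 : Matrix (Fin n) (Fin n) ℝ) (h • 1) Kp Kd with hBM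
  set y : ℕ → Matrix (Fin n) (Fin n) ℝ := fun k => g k * ξt k * (g k)⁻¹ + W k with hy
  have hginv1 : ∀ k, g k * (g k)⁻¹ = 1 := fun k =>
    Matrix.mul_nonsing_inv _ ((Matrix.isUnit_iff_isUnit_det _).mp (hgunit k))
  have hginv2 : ∀ k, (g k)⁻¹ * g k = 1 := fun k =>
    Matrix.nonsing_inv_mul _ ((Matrix.isUnit_iff_isUnit_det _).mp (hgunit k))
  have hξY : ∀ k, ξt (k+1) = Y k := by
    intro k
    rw [hξt' k, hv k]
    abel
  have hyrec : ∀ k, y (k+1) = Kp * epar k + Kd * y k := by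
    intro k
    have h1 : g (k+1) * ξt (k+1) * (g (k+1))⁻¹
        = Kp * epar k + Kd * (g k * ξt k * (g k)⁻¹ + W k) - W (k+1) := by
      rw [hξY k, hY k]
      rw [← Matrix.mul_assoc, ← Matrix.mul_assoc, hginv1 (k+1), Matrix.one_mul,
        Matrix.mul_assoc, hginv1 (k+1), Matrix.mul_one]
    simp only [hy]
    rw [h1, Matrix.mul_add]
    abel
  set Z : ℕ → Matrix (Fin n ⊕ Fin n) (Fin n) ℝ := fun k => Matrix.fromRows (epar k) (y k)
    with hZ
  have hZrec : ∀ k, Z (k+1) = BM * Z k := by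
    intro k
    simp only [hZ, hBM]
    rw [Matrix.fromBlocks_mul_fromRows]
    have htop : epar (k+1) = 1 * epar k + (h • (1:Matrix (Fin n) (Fin n) ℝ)) * y k := by
      rw [Matrix.one_mul, Matrix.smul_mul, Matrix.one_mul, hepar' k]
      simp only [hy]
      rw [smul_add]
      abel
    have hbot : y (k+1) = Kp * epar k + Kd * y k := hyrec k
    rw [htop, hbot]
  have hZk : ∀ k, Z k = BM^k * Z 0 := by
    intro k
    induction k with
    | zero => simp
    | succ k ih =>
      rw [hZrec k, ih, ← Matrix.mul_assoc, ← pow_succ']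
  have hZnorm : ∀ k, ‖Z k‖ ≤ C2 * ρ2^k * ‖Z 0‖ := by
    intro k
    rw [hZk k]
    calc ‖BM^k * Z 0‖ ≤ ‖BM^k‖ * ‖Z 0‖ := Matrix.frobenius_norm_mul _ _
      _ ≤ (C2 * ρ2^k) * ‖Z 0‖ := mul_le_mul_of_nonneg_right (hpow k) (norm_nonneg _)
  -- norm bounds for g
  have honesq : ‖(1 : Matrix (Fin n) (Fin n) ℝ)‖^2 = (n:ℝ) := by
    rw [← norm_sq_eq_trace, Matrix.transpose_one, Matrix.mul_one, Matrix.trace_one]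
    simp
  have hgn : ∀ k, ‖g k‖ ≤ Real.sqrt (n * c₂) := by
    intro k
    apply T4.le_of_sq_le_sq _ (Real.sqrt_nonneg _)
    rw [Real.sq_sqrt (by positivity)]
    rw [← norm_sq_eq_trace]
    have h1 := trace_conj_upper (hgbnd k).2 (1 : Matrix (Fin n) (Fin n) ℝ)
    rw [Matrix.one_mul, Matrix.transpose_one, Matrix.mul_one, honesq] at h1
    linarith
  have hginvn : ∀ k, ‖(g k)⁻¹‖ ≤ Real.sqrt (n * c₁⁻¹) := by
    intro k
    obtain ⟨hSt, hSpsd, hSlow, hSup⟩ := hS k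
    apply T4.le_of_sq_le_sq _ (Real.sqrt_nonneg _)
    rw [Real.sq_sqrt (by positivity)]
    have htr : ((g k)⁻¹ * ((g k)⁻¹)ᵀ).trace = ((g k * (g k)ᵀ)⁻¹).trace := by
      rw [Matrix.transpose_nonsing_inv, Matrix.trace_mul_comm, ← Matrix.mul_inv_rev]
    rw [← norm_sq_eq_trace, htr]
    have h1 := trace_conj_upper hSup (1 : Matrix (Fin n) (Fin n) ℝ)
    rw [Matrix.one_mul, Matrix.transpose_one, Matrix.mul_one, honesq] at h1
    linarith
  set K : ℝ := Real.sqrt (n * c₂) * Real.sqrt (n * c₁⁻¹) with hK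
  have hKnn : 0 ≤ K := by rw [hK]; positivity
  have hgK : ∀ k, ‖g k‖ * ‖(g k)⁻¹‖ ≤ K := fun k =>
    mul_le_mul (hgn k) (hginvn k) (norm_nonneg _) (Real.sqrt_nonneg _)
  -- W bound
  set cw : ℝ := α * (lmax * c₁⁻¹) with hcw
  have hcwnn : 0 ≤ cw := by rw [hcw]; positivity
  have hWb : ∀ k, ‖W k‖ ≤ cw * ‖eperp k‖ := by
    intro k
    obtain ⟨hSt, hSpsd, hSlow, hSup⟩ := hS k
    rw [hW k, norm_smul]
    have habs : ‖(-α : ℝ)‖ = α := by rw [norm_neg, Real.norm_eq_abs, abs_of_pos hα]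
    rw [habs]
    calc α * ‖Ppar (H (eperp k) * (g k * (g k)ᵀ)⁻¹)‖
        ≤ α * ‖H (eperp k) * (g k * (g k)ᵀ)⁻¹‖ := mul_le_mul_of_nonneg_left (hPparn _) hα.le
      _ ≤ α * (c₁⁻¹ * ‖H (eperp k)‖) :=
          mul_le_mul_of_nonneg_left (mul_psd_norm_le hSpsd hSt (by positivity) hSup _) hα.le
      _ ≤ α * (c₁⁻¹ * (lmax * ‖eperp k‖)) := by
          apply mul_le_mul_of_nonneg_left _ hα.le
          exact mul_le_mul_of_nonneg_left (hHnorm _ (heperp k)) (by positivity)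
      _ = cw * ‖eperp k‖ := by rw [hcw]; ring
  have hyb : ∀ k, ‖y k‖ ≤ K * ‖ξt k‖ + cw * ‖eperp k‖ := by
    intro k
    have h1 : ‖g k * ξt k * (g k)⁻¹‖ ≤ ‖g k‖ * ‖ξt k‖ * ‖(g k)⁻¹‖ := by
      calc ‖g k * ξt k * (g k)⁻¹‖ ≤ ‖g k * ξt k‖ * ‖(g k)⁻¹‖ := Matrix.frobenius_norm_mul _ _
        _ ≤ ‖g k‖ * ‖ξt k‖ * ‖(g k)⁻¹‖ :=
            mul_le_mul_of_nonneg_right (Matrix.frobenius_norm_mul _ _) (norm_nonneg _)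
    have h2 : ‖g k‖ * ‖ξt k‖ * ‖(g k)⁻¹‖ ≤ K * ‖ξt k‖ := by
      calc ‖g k‖ * ‖ξt k‖ * ‖(g k)⁻¹‖ = (‖g k‖ * ‖(g k)⁻¹‖) * ‖ξt k‖ := by ring
        _ ≤ K * ‖ξt k‖ := mul_le_mul_of_nonneg_right (hgK k) (norm_nonneg _)
    calc ‖y k‖ ≤ ‖g k * ξt k * (g k)⁻¹‖ + ‖W k‖ := by
          simp only [hy]; exact norm_add_le _ _
      _ ≤ K * ‖ξt k‖ + cw * ‖eperp k‖ := add_le_add (le_trans h1 h2) (hWb k)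
  have hξb : ∀ k, ‖ξt k‖ ≤ K * (‖y k‖ + ‖W k‖) := by
    intro k
    have hval : ξt k = (g k)⁻¹ * (y k - W k) * g k := by
      have h1 : y k - W k = g k * ξt k * (g k)⁻¹ := by simp only [hy]; abel
      rw [h1, ← Matrix.mul_assoc, ← Matrix.mul_assoc, hginv2 k, Matrix.one_mul,
        Matrix.mul_assoc, hginv2 k, Matrix.mul_one]
    rw [hval]
    have h1 : ‖(g k)⁻¹ * (y k - W k) * g k‖ ≤ ‖(g k)⁻¹‖ * ‖y k - W k‖ * ‖g k‖ := by
      calc ‖(g k)⁻¹ * (y k - W k) * g k‖ ≤ ‖(g k)⁻¹ * (y k - W k)‖ * ‖g k‖ :=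
            Matrix.frobenius_norm_mul _ _
        _ ≤ ‖(g k)⁻¹‖ * ‖y k - W k‖ * ‖g k‖ :=
            mul_le_mul_of_nonneg_right (Matrix.frobenius_norm_mul _ _) (norm_nonneg _)
    have h2 : ‖(g k)⁻¹‖ * ‖y k - W k‖ * ‖g k‖ ≤ K * (‖y k‖ + ‖W k‖) := by
      have h3 : ‖y k - W k‖ ≤ ‖y k‖ + ‖W k‖ := norm_sub_le _ _
      calc ‖(g k)⁻¹‖ * ‖y k - W k‖ * ‖g k‖ = (‖g k‖ * ‖(g k)⁻¹‖) * ‖y k - W k‖ := by ring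
        _ ≤ K * (‖y k‖ + ‖W k‖) := mul_le_mul (hgK k) h3 (norm_nonneg _) hKnn
    exact le_trans h1 h2
  -- final assembly
  set ρ : ℝ := max ρ1 ρ2 with hρ
  have hρpos : 0 < ρ := lt_of_lt_of_le hρ1pos (le_max_left _ _)
  have hρlt1 : ρ < 1 := max_lt hρ11 hρ21
  have hρ1k : ∀ k, ρ1^k ≤ ρ^k := fun k => pow_le_pow_left₀ hρ1pos.le (le_max_left _ _) k
  have hρ2k : ∀ k, ρ2^k ≤ ρ^k := fun k => pow_le_pow_left₀ hρ2pos.le (le_max_right _ _) k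
  have he0le : ‖eperp 0‖ ≤ ‖eperp 0‖ + ‖epar 0‖ + ‖ξt 0‖ := by
    nlinarith [norm_nonneg (epar 0), norm_nonneg (ξt 0)]
  have hE0nn : 0 ≤ ‖eperp 0‖ + ‖epar 0‖ + ‖ξt 0‖ := by positivity
  have hZ0 : ‖Z 0‖ ≤ (1 + K + cw) * (‖eperp 0‖ + ‖epar 0‖ + ‖ξt 0‖) := by
    calc ‖Z 0‖ ≤ ‖epar 0‖ + ‖y 0‖ := by simp only [hZ]; exact fromRows_norm_le _ _
      _ ≤ ‖epar 0‖ + (K * ‖ξt 0‖ + cw * ‖eperp 0‖) := by linarith [hyb 0]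
      _ ≤ (1 + K + cw) * (‖eperp 0‖ + ‖epar 0‖ + ‖ξt 0‖) := by
          nlinarith [mul_nonneg hKnn (norm_nonneg (eperp 0)), mul_nonneg hKnn (norm_nonneg (epar 0)),
            mul_nonneg hcwnn (norm_nonneg (epar 0)), mul_nonneg hcwnn (norm_nonneg (ξt 0)),
            norm_nonneg (eperp 0), norm_nonneg (ξt 0)]
  refine ⟨C1 + C2*(1+K+cw) + K*(C2*(1+K+cw) + cw*C1) + 1, ?_, ρ, hρpos, hρlt1, fun k => ?_⟩
  · have h0 : (0:ℝ) ≤ 1+K+cw := by linarith [hKnn, hcwnn]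
    have h1 : 0 ≤ C2*(1+K+cw) := mul_nonneg hC2pos.le h0
    have h2 : 0 ≤ K*(C2*(1+K+cw) + cw*C1) :=
      mul_nonneg hKnn (add_nonneg h1 (mul_nonneg hcwnn hC1pos.le))
    linarith [hC1pos]
  · have hA1 : ‖eperp k‖ ≤ C1 * ρ^k * (‖eperp 0‖ + ‖epar 0‖ + ‖ξt 0‖) :=
      le_trans (heperpk k) (prod3_mono hC1pos.le (hρ1k k) (pow_nonneg hρ1pos.le k) he0le
        (norm_nonneg _))
    have hZkb : ‖Z k‖ ≤ C2 * ρ^k * ((1+K+cw) * (‖eperp 0‖ + ‖epar 0‖ + ‖ξt 0‖)) :=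
      le_trans (hZnorm k) (prod3_mono hC2pos.le (hρ2k k) (pow_nonneg hρ2pos.le k) hZ0
        (norm_nonneg _))
    have hB1 : ‖epar k‖ ≤ C2 * ρ^k * ((1+K+cw) * (‖eperp 0‖ + ‖epar 0‖ + ‖ξt 0‖)) := by
      refine le_trans ?_ hZkb
      simp only [hZ]
      exact norm_le_fromRows_left _ _
    have hy1 : ‖y k‖ ≤ C2 * ρ^k * ((1+K+cw) * (‖eperp 0‖ + ‖epar 0‖ + ‖ξt 0‖)) := by
      refine le_trans ?_ hZkb
      simp only [hZ]
      exact norm_le_fromRows_right _ _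
    have hW1 : ‖W k‖ ≤ cw * (C1 * ρ^k * (‖eperp 0‖ + ‖epar 0‖ + ‖ξt 0‖)) :=
      le_trans (hWb k) (mul_le_mul_of_nonneg_left hA1 hcwnn)
    have hC3 : ‖ξt k‖ ≤ K * (C2 * ρ^k * ((1+K+cw) * (‖eperp 0‖ + ‖epar 0‖ + ‖ξt 0‖))
        + cw * (C1 * ρ^k * (‖eperp 0‖ + ‖epar 0‖ + ‖ξt 0‖))) :=
      le_trans (hξb k) (mul_le_mul_of_nonneg_left (add_le_add hy1 hW1) hKnn)
    have hρkE : 0 ≤ ρ^k * (‖eperp 0‖ + ‖epar 0‖ + ‖ξt 0‖) :=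
      mul_nonneg (pow_nonneg hρpos.le k) hE0nn
    nlinarith [hA1, hB1, hC3, hρkE]
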